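/- arXiv:2401.12731 — 7 statements merged into one kernel-verified Lean document; each statement's English description precedes it below -/
import Mathlib

section
/- Let n ≥ 1 and let P be a multivariate polynomial over ℝ in variables indexed by Fin n such that the degree of P in each variable is at most 1 (a multilinear polynomial), and let f : (Fin n → ℝ) → ℝ be its evaluation map. Let R ⊆ (Fin n → ℝ) be a nonempty, closed and bounded set. Then f attains its maximum over R at some point of the topological frontier of R, i.e., there exists x ∈ frontier R ∩ R with f y ≤ f x for all y ∈ R; likewise, f attains its minimum over R at some point of the frontier of R. -/
/-!
Take a maximiser `x` of `f` on the compact set `R`. If `x` is not interior it lies on the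
frontier. Otherwise `f`, being affine in the first coordinate, restricts to an affine function
with a local maximum on the coordinate line through `x`, hence is constant on that line; and the
line, which cannot stay inside the compact set `R`, meets its frontier. Minima are maxima of `-f`.
-/

open MvPolynomial Set Topology

variable {E : Type*} [AddCommGroup E] [Module ℝ E]

def AffineAlong (g : E → ℝ) (v : E) : Prop :=
  ∀ x, ∃ a b : ℝ, ∀ t : ℝ, g (x + t • v) = a + b * t

theorem AffineAlong.neg {g : E → ℝ} {v : E} (hg : AffineAlong g v) :
    AffineAlong (fun x => -g x) v := fun x => by
  obtain ⟨a, b, h⟩ := hg x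
  exact ⟨-a, -b, fun t => by simp only [h]; ring⟩

variable [TopologicalSpace E] [IsTopologicalAddGroup E] [ContinuousSMul ℝ E]

theorem exists_add_smul_mem_frontier [T2Space E] {K : Set E} (hK : IsCompact K) {x v : E}
    (hx : x ∈ K) (hv : v ≠ 0) : ∃ t : ℝ, x + t • v ∈ frontier K := by
  have hline : IsClosedEmbedding fun t : ℝ => x + t • v :=
    (Homeomorph.addLeft x).isClosedEmbedding.comp (isClosedEmbedding_smul_left hv)
  set S := (fun t : ℝ => x + t • v) ⁻¹' K
  have hS : S ≠ univ := fun h => noncompact_univ ℝ (h ▸ hline.isCompact_preimage hK)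
  obtain ⟨t, ht⟩ := nonempty_frontier_iff.mpr ⟨⟨0, by simpa [S] using hx⟩, hS⟩
  exact ⟨t, hline.continuous.frontier_preimage_subset K ht⟩

theorem AffineAlong.eq_of_isMaxOn {g : E → ℝ} {v : E} (hg : AffineAlong g v) {K : Set E}
    {x : E} (hmax : IsMaxOn g K x) (hx : x ∈ interior K) (t : ℝ) :
    g (x + t • v) = g x := by
  obtain ⟨a, b, hab⟩ := hg x
  have hloc : IsLocalMax (fun s : ℝ => g (x + s • v)) 0 := by
    refine IsLocalMax.comp_continuous (g := fun s : ℝ => x + s • v) ?_ (by fun_prop)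
    simpa using hmax.isLocalMax (mem_interior_iff_mem_nhds.mp hx)
  have hderiv : HasDerivAt (fun s : ℝ => g (x + s • v)) b 0 := by
    simp only [hab]
    simpa using ((hasDerivAt_id (0 : ℝ)).const_mul b).const_add a
  have hb : b = 0 := hloc.hasDerivAt_eq_zero hderiv
  have hx0 : g x = a := by simpa using hab 0
  rw [hab, hb, hx0, zero_mul, add_zero]

theorem AffineAlong.exists_isMaxOn_mem_frontier [T2Space E] {g : E → ℝ} {v : E}
    (hg : AffineAlong g v) (hv : v ≠ 0) {K : Set E} (hK : IsCompact K) (hne : K.Nonempty)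
    (hgc : ContinuousOn g K) : ∃ x ∈ frontier K ∩ K, IsMaxOn g K x := by
  obtain ⟨x, hxK, hmax⟩ := hK.exists_isMaxOn hne hgc
  by_cases hint : x ∈ interior K
  · obtain ⟨t, ht⟩ := exists_add_smul_mem_frontier hK hxK hv
    refine ⟨x + t • v, ⟨ht, hK.isClosed.frontier_subset ht⟩, ?_⟩
    rw [isMaxOn_iff] at hmax ⊢
    rwa [hg.eq_of_isMaxOn hmax hint]
  · exact ⟨x, ⟨⟨subset_closure hxK, hint⟩, hxK⟩, hmax⟩

theorem AffineAlong.exists_isMinOn_mem_frontier [T2Space E] {g : E → ℝ} {v : E}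
    (hg : AffineAlong g v) (hv : v ≠ 0) {K : Set E} (hK : IsCompact K) (hne : K.Nonempty)
    (hgc : ContinuousOn g K) : ∃ x ∈ frontier K ∩ K, IsMinOn g K x := by
  obtain ⟨x, hx, hmax⟩ := hg.neg.exists_isMaxOn_mem_frontier hv hK hne hgc.neg
  exact ⟨x, hx, by simpa using hmax.neg⟩

theorem MvPolynomial.exists_eval_cons_eq_add_mul {R : Type*} [CommRing R] {m : ℕ}
    {P : MvPolynomial (Fin (m + 1)) R} (hP : P.degreeOf 0 ≤ 1) (y : Fin m → R) :
    ∃ a b : R, ∀ t : R, eval (Fin.cons t y) P = a + b * t := by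
  have hq : ((finSuccEquiv R m P).map (eval y)).natDegree ≤ 1 :=
    Polynomial.natDegree_map_le.trans ((natDegree_finSuccEquiv P).trans_le hP)
  obtain ⟨b, a, hab⟩ := Polynomial.exists_eq_X_add_C_of_natDegree_le_one hq
  refine ⟨a, b, fun t => ?_⟩
  rw [eval_eq_eval_mv_eval', hab]
  simp only [Polynomial.eval_add, Polynomial.eval_mul, Polynomial.eval_C, Polynomial.eval_X]
  ring

theorem MvPolynomial.affineAlong_eval {m : ℕ} {P : MvPolynomial (Fin (m + 1)) ℝ}
    (hP : P.degreeOf 0 ≤ 1) : AffineAlong (fun x => eval x P) (Pi.single 0 1) := fun x => by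
  obtain ⟨a, b, hab⟩ := exists_eval_cons_eq_add_mul hP (Fin.tail x)
  refine ⟨a + b * x 0, b, fun t => ?_⟩
  have hline : x + t • Pi.single 0 1 = Fin.cons (x 0 + t) (Fin.tail x) := by
    ext j
    cases j using Fin.cases <;> simp [Fin.tail, add_comm]
  simp only [hline, hab]
  ring

theorem multilinear_extrema_on_frontier
    (n : ℕ) (hn : 1 ≤ n)
    (P : MvPolynomial (Fin n) ℝ) (hP : ∀ i : Fin n, P.degreeOf i ≤ 1)
    (f : (Fin n → ℝ) → ℝ) (hf : ∀ x, f x = MvPolynomial.eval x P)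
    (R : Set (Fin n → ℝ)) (hne : R.Nonempty) (hclosed : IsClosed R)
    (hbdd : Bornology.IsBounded R) :
    (∃ x ∈ frontier R ∩ R, ∀ y ∈ R, f y ≤ f x) ∧
    (∃ x ∈ frontier R ∩ R, ∀ y ∈ R, f x ≤ f y) := by
  obtain ⟨m, rfl⟩ : ∃ m, n = m + 1 := ⟨n - 1, by omega⟩
  obtain rfl : f = fun x => eval x P := funext hf
  have hR : IsCompact R := Metric.isCompact_of_isClosed_isBounded hclosed hbdd
  have hg := affineAlong_eval (hP 0)
  have hv : (Pi.single 0 1 : Fin (m + 1) → ℝ) ≠ 0 := by simp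
  have hcont := (continuous_eval P).continuousOn (s := R)
  obtain ⟨x, hx, hmax⟩ := hg.exists_isMaxOn_mem_frontier hv hR hne hcont
  obtain ⟨x', hx', hmin⟩ := hg.exists_isMinOn_mem_frontier hv hR hne hcont
  exact ⟨⟨x, hx, isMaxOn_iff.mp hmax⟩, ⟨x', hx', isMinOn_iff.mp hmin⟩⟩
end

section
/- Let P be a multivariate polynomial over ℝ in variables indexed by Fin n with degree at most 1 in each variable (a multilinear polynomial), with evaluation map f : (Fin n → ℝ) → ℝ. Let a, b : Fin n → ℝ with a i ≤ b i for all i, and let I = { x | ∀ i, a i ≤ x i ∧ x i ≤ b i } be the corresponding hyperrectangle. Then there exists a vertex v of I (a point with v i ∈ {a i, b i} for every i) such that f y ≤ f v for all y ∈ I, and there exists a vertex w of I such that f w ≤ f y for all y ∈ I. -/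
open MvPolynomial Finset

lemma aux_affine (n : ℕ) (P : MvPolynomial (Fin n) ℝ) (i : Fin n)
    (hP : P.degreeOf i ≤ 1) (z : Fin n → ℝ) :
    ∃ A B : ℝ, ∀ t : ℝ, MvPolynomial.eval (Function.update z i t) P = A + B * t := by
  classical
  refine ⟨∑ m ∈ P.support.filter (fun m => m i = 0),
      P.coeff m * ∏ j ∈ Finset.univ.erase i, z j ^ m j,
    ∑ m ∈ P.support.filter (fun m => ¬ m i = 0),
      P.coeff m * ∏ j ∈ Finset.univ.erase i, z j ^ m j, ?_⟩
  intro t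
  rw [MvPolynomial.eval_eq',
    ← Finset.sum_filter_add_sum_filter_not P.support (fun m => m i = 0)]
  rw [Finset.sum_mul]
  congr 1
  · apply Finset.sum_congr rfl
    intro m hm
    simp only [Finset.mem_filter] at hm
    congr 1
    rw [← Finset.mul_prod_erase Finset.univ _ (Finset.mem_univ i)]
    rw [Function.update_self, hm.2, pow_zero, one_mul]
    apply Finset.prod_congr rfl
    intro j hj
    rw [Function.update_of_ne (Finset.ne_of_mem_erase hj)]
  · apply Finset.sum_congr rfl
    intro m hm
    simp only [Finset.mem_filter] at hm
    have h1 : m i ≤ 1 := le_trans (by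
      rw [MvPolynomial.degreeOf_eq_sup]
      exact Finset.le_sup (f := fun m => m i) hm.1) hP
    have h2 : m i = 1 := le_antisymm h1 (Nat.one_le_iff_ne_zero.2 hm.2)
    rw [← Finset.mul_prod_erase Finset.univ _ (Finset.mem_univ i),
      Function.update_self, h2, pow_one]
    have : ∏ j ∈ Finset.univ.erase i, Function.update z i t j ^ m j
        = ∏ j ∈ Finset.univ.erase i, z j ^ m j := by
      apply Finset.prod_congr rfl
      intro j hj
      rw [Function.update_of_ne (Finset.ne_of_mem_erase hj)]
    rw [this]; ring

lemma exists_dominating_vertex (n : ℕ) (P : MvPolynomial (Fin n) ℝ)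
    (hP : ∀ i : Fin n, P.degreeOf i ≤ 1)
    (a b : Fin n → ℝ) (hab : ∀ i, a i ≤ b i) :
    ∀ y, (∀ i, a i ≤ y i ∧ y i ≤ b i) →
      ∃ z, (∀ i, z i = a i ∨ z i = b i) ∧
        MvPolynomial.eval y P ≤ MvPolynomial.eval z P := by
  have key : ∀ k : ℕ, k ≤ n → ∀ y, (∀ i, a i ≤ y i ∧ y i ≤ b i) →
      ∃ z, (∀ i, a i ≤ z i ∧ z i ≤ b i) ∧
        (∀ i : Fin n, (i : ℕ) < k → z i = a i ∨ z i = b i) ∧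
        MvPolynomial.eval y P ≤ MvPolynomial.eval z P := by
    intro k
    induction k with
    | zero => intro _ y hy; exact ⟨y, hy, fun i hi => absurd hi (Nat.not_lt_zero _), le_refl _⟩
    | succ k ih =>
      intro hk y hy
      obtain ⟨z, hz, hzv, hzle⟩ := ih (Nat.le_of_succ_le hk) y hy
      set i : Fin n := ⟨k, hk⟩ with hi
      obtain ⟨A, B, hAB⟩ := aux_affine n P i (hP i) z
      have hzeq : MvPolynomial.eval z P = A + B * z i := by
        rw [← hAB (z i), Function.update_eq_self]
      rcases le_or_gt 0 B with hB | hB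
      · refine ⟨Function.update z i (b i), ?_, ?_, ?_⟩
        · intro j
          rcases eq_or_ne j i with h | h
          · rw [h, Function.update_self]; exact ⟨hab i, le_refl _⟩
          · rw [Function.update_of_ne h]; exact hz j
        · intro j hj
          rcases eq_or_ne j i with h | h
          · rw [h]; right; rw [Function.update_self]
          · rw [Function.update_of_ne h]
            apply hzv
            have : (j : ℕ) ≠ k := by intro hc; exact h (Fin.ext hc)
            omega
        · rw [hAB]
          refine le_trans hzle ?_
          rw [hzeq]
          have := (hz i).2
          nlinarith
      · refine ⟨Function.update z i (a i), ?_, ?_, ?_⟩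
        · intro j
          rcases eq_or_ne j i with h | h
          · rw [h, Function.update_self]; exact ⟨le_refl _, hab i⟩
          · rw [Function.update_of_ne h]; exact hz j
        · intro j hj
          rcases eq_or_ne j i with h | h
          · rw [h]; left; rw [Function.update_self]
          · rw [Function.update_of_ne h]
            apply hzv
            have : (j : ℕ) ≠ k := by intro hc; exact h (Fin.ext hc)
            omega
        · rw [hAB]
          refine le_trans hzle ?_
          rw [hzeq]
          have := (hz i).1
          nlinarith
  intro y hy
  obtain ⟨z, _, hzv, hzle⟩ := key n (le_refl n) y hy
  exact ⟨z, fun i => hzv i i.isLt, hzle⟩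

lemma exists_max_vertex (n : ℕ) (P : MvPolynomial (Fin n) ℝ)
    (hP : ∀ i : Fin n, P.degreeOf i ≤ 1)
    (a b : Fin n → ℝ) (hab : ∀ i, a i ≤ b i) :
    ∃ v, (∀ i, a i ≤ v i ∧ v i ≤ b i) ∧ (∀ i, v i = a i ∨ v i = b i) ∧
      ∀ y, (∀ i, a i ≤ y i ∧ y i ≤ b i) →
        MvPolynomial.eval y P ≤ MvPolynomial.eval v P := by
  classical
  set S : Finset (Fin n → ℝ) :=
    Finset.image (fun c : Fin n → Bool => fun i => if c i then b i else a i) Finset.univ with hS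
  have hSne : S.Nonempty := ⟨_, Finset.mem_image_of_mem _ (Finset.mem_univ (fun _ => true))⟩
  obtain ⟨v, hvS, hvmax⟩ := S.exists_max_image (fun x => MvPolynomial.eval x P) hSne
  obtain ⟨c, _, hc⟩ := Finset.mem_image.1 hvS
  have hvert : ∀ i, v i = a i ∨ v i = b i := by
    intro i; rw [← hc]; by_cases h : c i <;> simp [h]
  refine ⟨v, ?_, hvert, ?_⟩
  · intro i
    rcases hvert i with h | h <;> rw [h]
    · exact ⟨le_refl _, hab i⟩
    · exact ⟨hab i, le_refl _⟩
  · intro y hy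
    obtain ⟨z, hzv, hzle⟩ := exists_dominating_vertex n P hP a b hab y hy
    refine le_trans hzle (hvmax z ?_)
    rw [hS]
    refine Finset.mem_image.2 ⟨fun i => if z i = b i then true else false,
      Finset.mem_univ _, ?_⟩
    funext i
    by_cases h : z i = b i
    · simp only [if_pos h, if_true]
      exact h.symm
    · have hza : z i = a i := (hzv i).resolve_right h
      simp only [if_neg h, Bool.false_eq_true, if_false]
      exact hza.symm

theorem multilinear_extrema_at_vertices
    (n : ℕ)
    (P : MvPolynomial (Fin n) ℝ) (hP : ∀ i : Fin n, P.degreeOf i ≤ 1)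
    (f : (Fin n → ℝ) → ℝ) (hf : ∀ x, f x = MvPolynomial.eval x P)
    (a b : Fin n → ℝ) (hab : ∀ i, a i ≤ b i)
    (I : Set (Fin n → ℝ)) (hI : I = { x | ∀ i, a i ≤ x i ∧ x i ≤ b i }) :
    (∃ v ∈ I, (∀ i, v i = a i ∨ v i = b i) ∧ ∀ y ∈ I, f y ≤ f v) ∧
    (∃ w ∈ I, (∀ i, w i = a i ∨ w i = b i) ∧ ∀ y ∈ I, f w ≤ f y) := by
  subst hI
  constructor
  · obtain ⟨v, hvI, hvert, hvmax⟩ := exists_max_vertex n P hP a b hab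
    exact ⟨v, hvI, hvert, fun y hy => by rw [hf, hf]; exact hvmax y hy⟩
  · have hP' : ∀ i : Fin n, (-P).degreeOf i ≤ 1 := by
      intro i
      rw [MvPolynomial.degreeOf_eq_sup, MvPolynomial.support_neg,
        ← MvPolynomial.degreeOf_eq_sup]
      exact hP i
    obtain ⟨w, hwI, hwert, hwmax⟩ := exists_max_vertex n (-P) hP' a b hab
    refine ⟨w, hwI, hwert, fun y hy => ?_⟩
    have := hwmax y hy
    simp only [map_neg] at this
    rw [hf, hf]
    linarith
end

section
/- Fix n ≥ 1, a classifier M, an entity e over n features, and a feature x ∈ Fin n. Then the SHAP polynomial p ↦ Shap(M,e,x,p) is a multilinear polynomial: there exists an MvPolynomial (Fin n) ℝ, P, whose degree in each individual variable is at most 1, such that for every p : Fin n → ℝ, the evaluation of P at p equals Shap(M,e,x,p). -/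
/-- The conditional expectation `φ(M,e,S,p)` of the classifier `M` given that the
entity agrees with `e` on `S`, under the product distribution with parameters `p`. -/
noncomputable def phi {n : ℕ} (M : (Fin n → Bool) → Bool) (e : Fin n → Bool)
    (S : Finset (Fin n)) (p : Fin n → ℝ) : ℝ :=
  ∑ e' ∈ Finset.univ.filter (fun e' : Fin n → Bool => ∀ i ∈ S, e' i = e i),
    (∏ i ∈ Sᶜ, (if e' i = true then p i else 1 - p i)) *
      (if M e' = true then (1 : ℝ) else 0)

/-- The SHAP score of feature `x` for classifier `M` and entity `e`, under the
product distribution with parameters `p`. -/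
noncomputable def Shap {n : ℕ} (M : (Fin n → Bool) → Bool) (e : Fin n → Bool)
    (x : Fin n) (p : Fin n → ℝ) : ℝ :=
  ∑ S ∈ ({x}ᶜ : Finset (Fin n)).powerset,
    ((S.card.factorial * (n - S.card - 1).factorial : ℝ) / n.factorial) *
      (phi M e (insert x S) p - phi M e S p)

open MvPolynomial

noncomputable def phiPoly {n : ℕ} (M : (Fin n → Bool) → Bool) (e : Fin n → Bool)
    (S : Finset (Fin n)) : MvPolynomial (Fin n) ℝ :=
  ∑ e' ∈ Finset.univ.filter (fun e' : Fin n → Bool => ∀ i ∈ S, e' i = e i),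
    (∏ i ∈ Sᶜ, (if e' i = true then X i else 1 - X i)) *
      C (if M e' = true then (1 : ℝ) else 0)

lemma degreeOf_neg' {σ R : Type*} [CommRing R] (i : σ) (f : MvPolynomial σ R) :
    degreeOf i (-f) = degreeOf i f := by
  simp [degreeOf_eq_sup, support_neg]

lemma degreeOf_sub_le' {σ R : Type*} [CommRing R] (i : σ) (f g : MvPolynomial σ R) :
    degreeOf i (f - g) ≤ max (degreeOf i f) (degreeOf i g) := by
  rw [sub_eq_add_neg]
  simpa [degreeOf_neg'] using degreeOf_add_le i f (-g)

lemma phiPoly_degreeOf {n : ℕ} (M : (Fin n → Bool) → Bool) (e : Fin n → Bool)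
    (S : Finset (Fin n)) (i : Fin n) : degreeOf i (phiPoly M e S) ≤ 1 := by
  refine le_trans (degreeOf_sum_le _ _ _) (Finset.sup_le fun e' _ => ?_)
  refine le_trans (degreeOf_mul_le _ _ _) ?_
  rw [degreeOf_C, add_zero]
  refine le_trans (degreeOf_prod_le _ _ _) ?_
  have h : ∀ j ∈ Sᶜ, degreeOf i (if e' j = true then (X j : MvPolynomial (Fin n) ℝ)
      else 1 - X j) ≤ if i = j then 1 else 0 := by
    intro j _
    split
    · rw [degreeOf_X]
    · refine le_trans (degreeOf_sub_le' _ _ _) (max_le ?_ ?_)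
      · rw [← C_1, degreeOf_C]; exact Nat.zero_le _
      · rw [degreeOf_X]
  refine le_trans (Finset.sum_le_sum h) ?_
  simp only [Finset.sum_ite_eq, Finset.sum_const_zero]
  split <;> simp

lemma phiPoly_eval {n : ℕ} (M : (Fin n → Bool) → Bool) (e : Fin n → Bool)
    (S : Finset (Fin n)) (p : Fin n → ℝ) :
    MvPolynomial.eval p (phiPoly M e S) = phi M e S p := by
  simp only [phiPoly, phi, map_sum, map_mul, map_prod, apply_ite (MvPolynomial.eval p),
    eval_X, eval_C, map_sub, map_one]

theorem shap_is_multilinear_polynomial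
    (n : ℕ) (hn : 1 ≤ n)
    (M : (Fin n → Bool) → Bool) (e : Fin n → Bool) (x : Fin n) :
    ∃ P : MvPolynomial (Fin n) ℝ, (∀ i : Fin n, P.degreeOf i ≤ 1) ∧
      ∀ p : Fin n → ℝ, MvPolynomial.eval p P = Shap M e x p := by
  refine ⟨∑ S ∈ ({x}ᶜ : Finset (Fin n)).powerset,
    C ((S.card.factorial * (n - S.card - 1).factorial : ℝ) / n.factorial) *
      (phiPoly M e (insert x S) - phiPoly M e S), fun i => ?_, fun p => ?_⟩
  · refine le_trans (degreeOf_sum_le _ _ _) (Finset.sup_le fun S _ => ?_)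
    refine le_trans (degreeOf_mul_le _ _ _) ?_
    rw [degreeOf_C, zero_add]
    exact le_trans (degreeOf_sub_le' _ _ _)
      (max_le (phiPoly_degreeOf M e _ i) (phiPoly_degreeOf M e S i))
  · simp only [Shap, map_sum, map_mul, map_sub, eval_C, phiPoly_eval]
end

section
/- Fix n ≥ 1, a classifier M' over n features, an entity e, and a feature w ∈ Fin n such that M' does not depend on feature w, i.e., M'(e₁) = M'(e₂) whenever e₁ and e₂ agree on all features other than w. Then for every finite set S ⊆ Fin n with w ∉ S and every p : Fin n → ℝ with 0 ≤ p i ≤ 1 for all i, one has φ(M',e,S ∪ {w},p) = φ(M',e,S,p). -/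
/-! Group the entities that agree with `e` on `S` by their values off `w`: each group is
`{update e' w b | b}`, on which `M'` is constant, and the weights in a group differ only by
the factor `p w` or `1 - p w`, which sum to `1`. -/

open Finset Function

section FiberOverFeature

variable {ι α β : Type*} [Fintype ι] [DecidableEq ι]

theorem sum_filter_agree_eq_sum_update [Fintype α] [DecidableEq α] [AddCommMonoid β]
    (g : (ι → α) → β) (e : ι → α) {S : Finset ι} {w : ι}
    [DecidablePred fun e' : ι → α => ∀ i ∈ S, e' i = e i]
    [DecidablePred fun e' : ι → α => ∀ i ∈ insert w S, e' i = e i] (hwS : w ∉ S) :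
    ∑ e' ∈ univ.filter (fun e' : ι → α => ∀ i ∈ S, e' i = e i), g e' =
      ∑ e' ∈ univ.filter (fun e' : ι → α => ∀ i ∈ insert w S, e' i = e i),
        ∑ b : α, g (update e' w b) := by
  have hne : ∀ i ∈ S, i ≠ w := fun i hi h => hwS (h ▸ hi)
  rw [← sum_product']
  refine sum_nbij' (fun e' => (update e' w (e w), e' w)) (fun q => update q.1 w q.2)
    ?_ ?_ (fun _ _ => by simp) ?_ (fun _ _ => by simp)
  · intro e' he'
    simp only [mem_filter, mem_product, mem_univ, true_and, and_true, mem_insert,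
      forall_eq_or_imp] at he' ⊢
    exact ⟨update_self .., fun i hi => by rw [update_of_ne (hne i hi), he' i hi]⟩
  · rintro ⟨f, b⟩ hf
    simp only [mem_filter, mem_product, mem_univ, true_and, and_true, mem_insert,
      forall_eq_or_imp] at hf ⊢
    exact fun i hi => by rw [update_of_ne (hne i hi), hf.2 i hi]
  · rintro ⟨f, b⟩ hf
    simp only [mem_product, mem_filter, mem_insert, forall_eq_or_imp] at hf
    simp [← hf.1.2.1]

theorem prod_compl_update [CommMonoid β] (f : ι → α → β) (e' : ι → α) {S : Finset ι} {w : ι}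
    (hwS : w ∉ S) (b : α) :
    ∏ i ∈ Sᶜ, f i (update e' w b i) = f w b * ∏ i ∈ (insert w S)ᶜ, f i (e' i) := by
  have hS : Sᶜ = insert w (insert w S)ᶜ := by
    ext i
    by_cases h : i = w <;> simp [h, hwS]
  rw [hS, prod_insert (by simp), update_self]
  congr 1
  refine prod_congr rfl fun i hi => ?_
  rw [update_of_ne (by simpa using hi : i ≠ w ∧ i ∉ S).1]

end FiberOverFeature

theorem phi_insert_dummy_feature_general
    (n : ℕ)
    (M' : (Fin n → Bool) → Bool) (e : Fin n → Bool) (w : Fin n)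
    (hdummy : ∀ e₁ e₂ : Fin n → Bool, (∀ i, i ≠ w → e₁ i = e₂ i) → M' e₁ = M' e₂)
    (S : Finset (Fin n)) (hwS : w ∉ S)
    (p : Fin n → ℝ) :
    phi M' e (insert w S) p = phi M' e S p := by
  have hM : ∀ e' b, M' (update e' w b) = M' e' :=
    fun e' b => hdummy _ _ fun i hi => update_of_ne hi _ _
  rw [phi, phi, sum_filter_agree_eq_sum_update _ e hwS]
  refine sum_congr rfl fun e' _ => ?_
  simp only [prod_compl_update (fun i b => if b = true then p i else 1 - p i) e' hwS, hM,
    Fintype.sum_bool, if_true, Bool.false_eq_true, if_false]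
  ring

theorem phi_insert_dummy_feature
    (n : ℕ) (hn : 1 ≤ n)
    (M' : (Fin n → Bool) → Bool) (e : Fin n → Bool) (w : Fin n)
    (hdummy : ∀ e₁ e₂ : Fin n → Bool, (∀ i, i ≠ w → e₁ i = e₂ i) → M' e₁ = M' e₂)
    (S : Finset (Fin n)) (hwS : w ∉ S)
    (p : Fin n → ℝ) (hp : ∀ i, 0 ≤ p i ∧ p i ≤ 1) :
    phi M' e (insert w S) p = phi M' e S p :=
  phi_insert_dummy_feature_general n M' e w hdummy S hwS p
end

section
/- Fix n ≥ 1, a classifier M' over n features, an entity e, and a feature w ∈ Fin n such that M' does not depend on feature w, i.e., M'(e₁) = M'(e₂) whenever e₁ and e₂ agree on all features other than w. Then for every p : Fin n → ℝ with 0 ≤ p i ≤ 1 for all i, the SHAP score of the dummy feature w vanishes: Shap(M',e,w,p) = 0. -/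
lemma phi_insert_dummy {n : ℕ} (M : (Fin n → Bool) → Bool) (e : Fin n → Bool)
    (w : Fin n)
    (hdummy : ∀ e₁ e₂ : Fin n → Bool, (∀ i, i ≠ w → e₁ i = e₂ i) → M e₁ = M e₂)
    (p : Fin n → ℝ) (S : Finset (Fin n)) (hw : w ∉ S) :
    phi M e (insert w S) p = phi M e S p := by
  classical
  have hwS : w ∈ Sᶜ := Finset.mem_compl.2 hw
  have hcompl : (insert w S)ᶜ = Sᶜ.erase w := by
    ext i; simp [Finset.mem_erase, and_comm]
  set T : ℝ := ∑ e' ∈ Finset.univ.filter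
      (fun e' : Fin n → Bool => ∀ i ∈ insert w S, e' i = e i),
    (∏ i ∈ Sᶜ.erase w, (if e' i = true then p i else 1 - p i)) *
      (if M e' = true then (1 : ℝ) else 0) with hT
  have h1 : phi M e (insert w S) p = T := by
    rw [phi, hcompl]
  rw [h1, phi]
  rw [← Finset.sum_filter_add_sum_filter_not
    (Finset.univ.filter (fun e' : Fin n → Bool => ∀ i ∈ S, e' i = e i))
    (fun e' => e' w = e w)]
  have hset : (Finset.univ.filter (fun e' : Fin n → Bool => ∀ i ∈ S, e' i = e i)).filter
      (fun e' => e' w = e w)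
      = Finset.univ.filter (fun e' : Fin n → Bool => ∀ i ∈ insert w S, e' i = e i) := by
    ext e'
    simp only [Finset.mem_filter, Finset.mem_univ, true_and, Finset.mem_insert]
    constructor
    · rintro ⟨h, hw'⟩ i hi
      rcases hi with rfl | hi
      · exact hw'
      · exact h i hi
    · intro h
      exact ⟨fun i hi => h i (Or.inr hi), h w (Or.inl rfl)⟩
  have h2 : ∑ e' ∈ (Finset.univ.filter (fun e' : Fin n → Bool => ∀ i ∈ S, e' i = e i)).filter
      (fun e' => e' w = e w),
      (∏ i ∈ Sᶜ, (if e' i = true then p i else 1 - p i)) *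
        (if M e' = true then (1 : ℝ) else 0)
      = (if e w = true then p w else 1 - p w) * T := by
    rw [hset, hT, Finset.mul_sum]
    apply Finset.sum_congr rfl
    intro e' he'
    simp only [Finset.mem_filter, Finset.mem_insert, Finset.mem_univ, true_and] at he'
    have hew : e' w = e w := he' w (Or.inl rfl)
    rw [← Finset.mul_prod_erase _ _ hwS, hew, mul_assoc]
  have h3 : ∑ e' ∈ (Finset.univ.filter (fun e' : Fin n → Bool => ∀ i ∈ S, e' i = e i)).filter
      (fun e' => ¬ e' w = e w),
      (∏ i ∈ Sᶜ, (if e' i = true then p i else 1 - p i)) *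
        (if M e' = true then (1 : ℝ) else 0)
      = (if e w = true then 1 - p w else p w) * T := by
    rw [hT, Finset.mul_sum]
    apply Finset.sum_bij' (i := fun (a : Fin n → Bool) (_ : a ∈ _) => Function.update a w (e w))
      (j := fun (a : Fin n → Bool) (_ : a ∈ _) => Function.update a w (!e w))
    -- hi
    · intro a ha
      simp only [Finset.mem_filter, Finset.mem_univ, true_and, Finset.mem_insert] at ha ⊢
      intro i hi
      rcases hi with rfl | hi
      · simp [Function.update_self]
      · rw [Function.update_of_ne (by rintro rfl; exact hw hi)]
        exact ha.1 i hi
    -- hj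
    · intro a ha
      simp only [Finset.mem_filter, Finset.mem_univ, true_and, Finset.mem_insert] at ha ⊢
      constructor
      · intro i hi
        rw [Function.update_of_ne (by rintro rfl; exact hw hi)]
        exact ha i (Or.inr hi)
      · simp [Function.update_self]
    -- left_inv
    · intro a ha
      simp only [Finset.mem_filter, Finset.mem_univ, true_and] at ha
      funext i
      by_cases h : i = w
      · rw [h]
        simp only [Function.update_self]
        have h2 : ¬ a w = e w := ha.2
        cases hX : a w <;> cases hY : e w <;> simp [hX, hY] at h2 ⊢
      · simp [Function.update_of_ne h]
    -- right_inv
    · intro a ha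
      simp only [Finset.mem_filter, Finset.mem_univ, true_and] at ha
      funext i
      by_cases h : i = w
      · rw [h]
        simp only [Function.update_self]
        exact (ha w (Finset.mem_insert_self w S)).symm
      · simp [Function.update_of_ne h]
    -- h
    · intro a ha
      simp only [Finset.mem_filter, Finset.mem_univ, true_and] at ha
      have hM : M a = M (Function.update a w (e w)) := by
        apply hdummy
        intro i hi
        rw [Function.update_of_ne hi]
      rw [← Finset.mul_prod_erase _ _ hwS]
      have haw : a w = !e w := by
        have h2 : ¬ a w = e w := ha.2
        cases hX : a w <;> cases hY : e w <;> simp [hX, hY] at h2 ⊢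
      have hprod : ∏ i ∈ Sᶜ.erase w, (if a i = true then p i else 1 - p i)
          = ∏ i ∈ Sᶜ.erase w, (if Function.update a w (e w) i = true then p i else 1 - p i) := by
        apply Finset.prod_congr rfl
        intro i hi
        rw [Function.update_of_ne (Finset.mem_erase.1 hi).1]
      rw [haw, hprod, hM, mul_assoc]
      cases e w <;> simp
  rw [h2, h3]
  cases hew : e w <;> simp <;> ring


theorem shap_dummy_feature_eq_zero
    (n : ℕ) (hn : 1 ≤ n)
    (M' : (Fin n → Bool) → Bool) (e : Fin n → Bool) (w : Fin n)
    (hdummy : ∀ e₁ e₂ : Fin n → Bool, (∀ i, i ≠ w → e₁ i = e₂ i) → M' e₁ = M' e₂)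
    (p : Fin n → ℝ) (hp : ∀ i, 0 ≤ p i ∧ p i ≤ 1) :
    Shap M' e w p = 0 := by
  rw [Shap]
  apply Finset.sum_eq_zero
  intro S hS
  have hw : w ∉ S := by
    intro hwS
    have := Finset.mem_powerset.1 hS hwS
    simp at this
  rw [phi_insert_dummy M' e w hdummy p S hw]
  simp
end

section
/- Fix n ≥ 1, a classifier M over n features and an entity e over n features. Define the classifier M' over n+1 features by M'(f) = M(f restricted to the first n features), i.e., M' ignores the last feature, and define the entity e' over n+1 features by e'(i) = e(i) for i < n and e'(n) = false. Then for every feature x ∈ Fin n and every q : Fin (n+1) → ℝ with 0 ≤ q i ≤ 1 for all i, one has Shap(M',e',x,q) = Shap(M,e,x,q restricted to the first n coordinates), where on the left SHAP is computed with n+1 features and on the right with n features. -/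
open Finset Nat

namespace Finset

theorem powerset_map {α β : Type*} (s : Finset α) (f : α ↪ β) :
    (s.map f).powerset = s.powerset.map (mapEmbedding f).toEmbedding := by
  ext t
  simp [subset_map_iff, eq_comm]

end Finset

namespace Fin

variable {n : ℕ}

theorem compl_map_castSuccEmb (T : Finset (Fin n)) :
    (T.map castSuccEmb)ᶜ = insert (last n) (Tᶜ.map castSuccEmb) := by
  ext i
  induction i using lastCases with
  | last => simp [castSucc_ne_last]
  | cast j => simp only [mem_compl, mem_insert, mem_map, coe_castSuccEmb, castSucc_inj,
      exists_eq_right, castSucc_ne_last, false_or]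

theorem prod_compl_eq_prod_compl_castSucc_mul {M : Type*} [CommMonoid M]
    {S : Finset (Fin (n + 1))} {T : Finset (Fin n)} (hT : ∀ i, i ∈ T ↔ i.castSucc ∈ S)
    (g : Fin (n + 1) → M) :
    ∏ i ∈ Sᶜ, g i = (∏ i ∈ Tᶜ, g i.castSucc) * if last n ∈ S then 1 else g (last n) := by
  rw [← prod_ite_mem_eq Sᶜ, ← prod_ite_mem_eq Tᶜ, prod_univ_castSucc]
  simp only [mem_compl, hT, ite_not]

theorem sum_fun_eq_sum_sum_snoc {α β : Type*} [Fintype α] [AddCommMonoid β]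
    (F : (Fin (n + 1) → α) → β) :
    ∑ g, F g = ∑ f : Fin n → α, ∑ a, F (snoc f a) := by
  rw [Finset.sum_comm, ← Fintype.sum_prod_type']
  exact (Fintype.sum_equiv (snocEquiv fun _ => α) _ _ fun _ => rfl).symm

end Fin

theorem phi_comp_init_snoc {n : ℕ} (M : (Fin n → Bool) → Bool) (e : Fin n → Bool) (c : Bool)
    {S : Finset (Fin (n + 1))} {T : Finset (Fin n)} (hT : ∀ i, i ∈ T ↔ i.castSucc ∈ S)
    (q : Fin (n + 1) → ℝ) :
    phi (fun f => M (Fin.init f)) (Fin.snoc e c : Fin (n + 1) → Bool) S q =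
      phi M e T (Fin.init q) := by
  have hagree (f : Fin n → Bool) (b : Bool) :
      (∀ i ∈ S, (Fin.snoc f b : Fin (n + 1) → Bool) i = (Fin.snoc e c : Fin (n + 1) → Bool) i) ↔
        (∀ i ∈ T, f i = e i) ∧ (Fin.last n ∈ S → b = c) := by
    simp [hT, Fin.forall_fin_succ']
  unfold phi
  rw [sum_filter, sum_filter, Fin.sum_fun_eq_sum_sum_snoc]
  refine sum_congr rfl fun f _ => ?_
  simp only [hagree, Fin.prod_compl_eq_prod_compl_castSucc_mul hT, Fin.snoc_castSucc,
    Fin.snoc_last, Fin.init_def]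
  by_cases hlast : Fin.last n ∈ S
  · simp [hlast, ite_and]
  · simp only [hlast, if_false, false_imp_iff, and_true, Fintype.sum_bool, if_true,
      Bool.false_eq_true]
    split_ifs <;> ring

noncomputable def shapCoeff (m j : ℕ) : ℝ :=
  (j.factorial * (m - j - 1).factorial : ℝ) / m.factorial

theorem shap_eq_sum_shapCoeff {n : ℕ} (M : (Fin n → Bool) → Bool) (e : Fin n → Bool)
    (x : Fin n) (p : Fin n → ℝ) :
    Shap M e x p = ∑ S ∈ ({x}ᶜ : Finset (Fin n)).powerset,
      shapCoeff n S.card * (phi M e (insert x S) p - phi M e S p) :=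
  rfl

theorem shapCoeff_succ_add_shapCoeff_succ_succ {n j : ℕ} (h : j < n) :
    shapCoeff (n + 1) j + shapCoeff (n + 1) (j + 1) = shapCoeff n j := by
  obtain ⟨k, rfl⟩ := Nat.exists_eq_add_of_lt h
  unfold shapCoeff
  rw [show j + k + 1 + 1 - j - 1 = k + 1 by omega, show j + k + 1 + 1 - (j + 1) - 1 = k by omega,
    show j + k + 1 - j - 1 = k by omega, factorial_succ (j + k + 1), factorial_succ k,
    factorial_succ j]
  field_simp
  push_cast
  ring

theorem shap_comp_init_snoc {n : ℕ} (M : (Fin n → Bool) → Bool) (e : Fin n → Bool) (c : Bool)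
    (x : Fin n) (q : Fin (n + 1) → ℝ) :
    Shap (fun f => M (Fin.init f)) (Fin.snoc e c : Fin (n + 1) → Bool) x.castSucc q =
      Shap M e x (Fin.init q) := by
  have hφ (U : Finset (Fin n)) :
      phi (fun f => M (Fin.init f)) (Fin.snoc e c : Fin (n + 1) → Bool)
          (U.map Fin.castSuccEmb) q = phi M e U (Fin.init q) ∧
        phi (fun f => M (Fin.init f)) (Fin.snoc e c : Fin (n + 1) → Bool)
          (insert (Fin.last n) (U.map Fin.castSuccEmb)) q = phi M e U (Fin.init q) :=
    ⟨phi_comp_init_snoc M e c (by simp) q,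
      phi_comp_init_snoc M e c (by simp [Fin.castSucc_ne_last]) q⟩
  have hlast (U : Finset (Fin n)) : Fin.last n ∉ U.map Fin.castSuccEmb := by
    simp [Fin.castSucc_ne_last]
  have hcompl : ({x.castSucc}ᶜ : Finset (Fin (n + 1))) =
      insert (Fin.last n) (({x}ᶜ : Finset (Fin n)).map Fin.castSuccEmb) := by
    rw [← Fin.compl_map_castSuccEmb, map_singleton, Fin.coe_castSuccEmb]
  rw [shap_eq_sum_shapCoeff, shap_eq_sum_shapCoeff, hcompl, sum_powerset_insert (hlast _),
    powerset_map, sum_map, sum_map, ← sum_add_distrib]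
  refine sum_congr rfl fun T hT => ?_
  have hcard : T.card < n := by
    simpa using card_lt_univ_of_notMem fun hx =>
      mem_compl.1 (mem_powerset.1 hT hx) (mem_singleton_self x)
  simp only [RelEmbedding.coe_toEmbedding, mapEmbedding_apply]
  rw [insert_comm, ← Fin.coe_castSuccEmb, ← map_insert, (hφ T).1, (hφ T).2, (hφ _).1, (hφ _).2,
    card_insert_of_notMem (hlast T), card_map, ← add_mul,
    shapCoeff_succ_add_shapCoeff_succ_succ hcard]

theorem shap_ignores_added_dummy_feature_general
    (n : ℕ)
    (M : (Fin n → Bool) → Bool) (e : Fin n → Bool)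
    (M' : (Fin (n + 1) → Bool) → Bool)
    (hM' : ∀ f : Fin (n + 1) → Bool, M' f = M (fun i : Fin n => f i.castSucc))
    (e' : Fin (n + 1) → Bool)
    (he' : e' = Fin.snoc e false)
    (x : Fin n)
    (q : Fin (n + 1) → ℝ) :
    Shap M' e' x.castSucc q = Shap M e x (fun i : Fin n => q i.castSucc) := by
  obtain rfl : M' = fun f => M (Fin.init f) := funext hM'
  subst he'
  exact shap_comp_init_snoc M e false x q

theorem shap_ignores_added_dummy_feature
    (n : ℕ) (hn : 1 ≤ n)
    (M : (Fin n → Bool) → Bool) (e : Fin n → Bool)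
    (M' : (Fin (n + 1) → Bool) → Bool)
    (hM' : ∀ f : Fin (n + 1) → Bool, M' f = M (fun i : Fin n => f i.castSucc))
    (e' : Fin (n + 1) → Bool)
    (he' : e' = Fin.snoc e false)
    (x : Fin n)
    (q : Fin (n + 1) → ℝ) (hq : ∀ i, 0 ≤ q i ∧ q i ≤ 1) :
    Shap M' e' x.castSucc q = Shap M e x (fun i : Fin n => q i.castSucc) :=
  shap_ignores_added_dummy_feature_general n M e M' hM' e' he' x q
end

section
/- Fix n ≥ 1 and let φ be a 3-CNF formula over variables Fin n, given as a finite list of m clauses, each clause being a triple of literals whose three underlying variables are pairwise distinct. Define g_lit of the positive literal on variable k to be the function x ↦ 1 − x k and g_lit of the negative literal on variable k to be x ↦ x k, and define f_φ : (Fin n → ℝ) → ℝ by f_φ(x) = − Σ over the clauses (l₁ ∨ l₂ ∨ l₃) of φ of g_lit(l₁)(x) · g_lit(l₂)(x) · g_lit(l₃)(x). Then φ is satisfiable (there is a Boolean assignment satisfying every clause) if and only if there exists x with 0 ≤ x i ≤ 1 for all i such that f_φ(x) ≥ 0. -/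
/-- A literal over variables `Fin n`: a variable together with a sign
(`true` = positive literal `x_k`, `false` = negative literal `¬x_k`). -/
abbrev Literal (n : ℕ) := Fin n × Bool

/-- A clause with three literals. -/
abbrev Clause (n : ℕ) := Literal n × Literal n × Literal n

/-- The polynomial associated to a literal: `x ↦ 1 - x k` for the positive
literal on variable `k`, and `x ↦ x k` for the negative literal. -/
def gLit {n : ℕ} (l : Literal n) (x : Fin n → ℝ) : ℝ :=
  if l.2 then 1 - x l.1 else x l.1

/-- A Boolean assignment satisfies the literal `(k, s)` iff `a k = s`. -/
abbrev satLit {n : ℕ} (a : Fin n → Bool) (l : Literal n) : Prop :=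
  a l.1 = l.2

/-- The multilinear polynomial `f_φ` associated to a 3-CNF formula `φ`:
minus the sum over the clauses of the products of the literal polynomials. -/
def fPhi {n : ℕ} (φ : List (Clause n)) (x : Fin n → ℝ) : ℝ :=
  - (φ.map (fun c => gLit c.1 x * gLit c.2.1 x * gLit c.2.2 x)).sum

private lemma gLit_nonneg {n : ℕ} (l : Literal n) (x : Fin n → ℝ)
    (hx : ∀ i, 0 ≤ x i ∧ x i ≤ 1) : 0 ≤ gLit l x := by
  unfold gLit
  split
  · linarith [(hx l.1).2]
  · exact (hx l.1).1

private lemma gLit_of_sat {n : ℕ} (a : Fin n → Bool) (l : Literal n)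
    (h : satLit a l) : gLit l (fun i => if a i then (1:ℝ) else 0) = 0 := by
  obtain ⟨k, b⟩ := l
  have hk : a k = b := h
  cases b
  · simp [gLit, hk]
  · simp [gLit, hk]

private lemma sat_of_gLit_zero {n : ℕ} (x : Fin n → ℝ) (l : Literal n)
    (h : gLit l x = 0) : satLit (fun i => decide (x i = 1)) l := by
  obtain ⟨k, b⟩ := l
  cases b
  · have hx : x k = 0 := h
    show (decide (x k = 1)) = false
    simp [hx]
  · have hx : x k = 1 := by have : (1:ℝ) - x k = 0 := h; linarith
    show (decide (x k = 1)) = true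
    simp [hx]

theorem threeSat_iff_fPhi_nonneg
    (n : ℕ) (hn : 1 ≤ n)
    (φ : List (Clause n))
    (hdist : ∀ c ∈ φ, c.1.1 ≠ c.2.1.1 ∧ c.1.1 ≠ c.2.2.1 ∧ c.2.1.1 ≠ c.2.2.1) :
    (∃ a : Fin n → Bool, ∀ c ∈ φ, satLit a c.1 ∨ satLit a c.2.1 ∨ satLit a c.2.2)
      ↔ ∃ x : Fin n → ℝ, (∀ i, 0 ≤ x i ∧ x i ≤ 1) ∧ fPhi φ x ≥ 0 := by
  constructor
  · rintro ⟨a, ha⟩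
    refine ⟨fun i => if a i then 1 else 0, fun i => ?_, ?_⟩
    · by_cases h : a i <;> simp [h]
    have hz : (φ.map (fun c => gLit c.1 (fun i => if a i then (1:ℝ) else 0) *
        gLit c.2.1 (fun i => if a i then 1 else 0) *
        gLit c.2.2 (fun i => if a i then 1 else 0))).sum = 0 := by
      apply List.sum_eq_zero
      intro r hr
      simp only [List.mem_map] at hr
      obtain ⟨c, hc, rfl⟩ := hr
      rcases ha c hc with h | h | h
      · rw [gLit_of_sat a _ h]; ring
      · rw [gLit_of_sat a _ h]; ring
      · rw [gLit_of_sat a _ h]; ring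
    unfold fPhi
    rw [hz]
    norm_num
  · rintro ⟨x, hx, hf⟩
    refine ⟨fun i => decide (x i = 1), ?_⟩
    intro c hc
    have hsum : (φ.map (fun c => gLit c.1 x * gLit c.2.1 x * gLit c.2.2 x)).sum ≤ 0 := by
      unfold fPhi at hf; linarith
    have hterm : gLit c.1 x * gLit c.2.1 x * gLit c.2.2 x = 0 := by
      have hall : ∀ r ∈ (φ.map (fun c => gLit c.1 x * gLit c.2.1 x * gLit c.2.2 x)), 0 ≤ r := by
        intro r hr
        simp only [List.mem_map] at hr
        obtain ⟨d, hd, rfl⟩ := hr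
        exact mul_nonneg (mul_nonneg (gLit_nonneg _ _ hx) (gLit_nonneg _ _ hx))
          (gLit_nonneg _ _ hx)
      have hmem : gLit c.1 x * gLit c.2.1 x * gLit c.2.2 x ∈
          (φ.map (fun c => gLit c.1 x * gLit c.2.1 x * gLit c.2.2 x)) :=
        List.mem_map.mpr ⟨c, hc, rfl⟩
      have h1 : 0 ≤ gLit c.1 x * gLit c.2.1 x * gLit c.2.2 x := hall _ hmem
      have h2 : gLit c.1 x * gLit c.2.1 x * gLit c.2.2 x ≤
          (φ.map (fun c => gLit c.1 x * gLit c.2.1 x * gLit c.2.2 x)).sum :=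
        List.single_le_sum hall _ hmem
      linarith
    rcases mul_eq_zero.mp hterm with h | h
    · rcases mul_eq_zero.mp h with h | h
      · exact Or.inl (sat_of_gLit_zero x _ h)
      · exact Or.inr (Or.inl (sat_of_gLit_zero x _ h))
    · exact Or.inr (Or.inr (sat_of_gLit_zero x _ h))
end
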